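/- arXiv:1905.02107 — 2 statements merged into one kernel-verified Lean document; each statement's English description precedes it below -/
import Mathlib

section
/- Let N, M ≥ 1 be integers and let (T_{i,j,k})_{i∈{1,…,N}, j,k∈{1,…,M}} be square-integrable real random variables on a common probability space such that (a) |Cov(T_{i,j,k}, T_{i',l,m})| ≤ K for all indices, and (b) Cov(T_{i,j,k}, T_{i',l,m}) = 0 whenever i ≠ i' and {j,k} ∩ {l,m} = ∅. Then Var((NM²)^{-1} · Σ_{i=1}^N Σ_{j=1}^M Σ_{k=1}^M T_{i,j,k}) ≤ K·(1/N + 4/M). -/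
/-!
Expanding the variance gives `(NM²)⁻² ∑_{p,q} Cov(T_p, T_q)` over pairs of index triples.
Each covariance is at most `K`, and it vanishes unless `p` and `q` share their first index or
a column index. A fixed `p` has at most `M² + 4NM` such partners (`M²` with the same first index,
at most `NM` for each of the four ways of matching a column index), so the double sum is at most
`NM² (M² + 4NM) K = (NM²)² K (1/N + 4/M)`.
-/

open MeasureTheory

/-- Covariance `Cov(X,Y) = E[XY] − E[X]·E[Y]`. -/
noncomputable def cov {Ω : Type*} [MeasurableSpace Ω] (P : Measure Ω) (X Y : Ω → ℝ) : ℝ :=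
  (∫ ω, X ω * Y ω ∂P) - (∫ ω, X ω ∂P) * (∫ ω, Y ω ∂P)

/-- Variance `Var(X) = Cov(X,X)`. -/
noncomputable def var {Ω : Type*} [MeasurableSpace Ω] (P : Measure Ω) (X : Ω → ℝ) : ℝ :=
  cov P X X

open ProbabilityTheory Finset

section Covariance

variable {Ω : Type*} [MeasurableSpace Ω] {P : Measure Ω} [IsProbabilityMeasure P]

lemma cov_eq_covariance {X Y : Ω → ℝ} (hX : MemLp X 2 P) (hY : MemLp Y 2 P) :
    cov P X Y = covariance X Y P := by
  rw [covariance_eq_sub hX hY]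
  rfl

lemma var_const_mul_sum {ι : Type*} {s : Finset ι} {X : ι → Ω → ℝ}
    (hX : ∀ i ∈ s, MemLp (X i) 2 P) (c : ℝ) :
    var P (fun ω => c * ∑ i ∈ s, X i ω) = c ^ 2 * ∑ i ∈ s, ∑ j ∈ s, cov P (X i) (X j) := by
  have hS : MemLp (fun ω => ∑ i ∈ s, X i ω) 2 P := memLp_finsetSum s hX
  rw [var, cov_eq_covariance (hS.const_mul c) (hS.const_mul c), covariance_const_mul_left,
    covariance_const_mul_right, covariance_fun_sum_fun_sum' hX hX, ← mul_assoc, ← sq]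
  congr 1
  exact sum_congr rfl fun i hi => sum_congr rfl fun j hj =>
    (cov_eq_covariance (hX i hi) (hX j hj)).symm

end Covariance

lemma sum_sum_le_of_sparse_rows {α : Type*} {s : Finset α} (R : α → α → Prop) [DecidableRel R]
    {f : α → α → ℝ} {K : ℝ} (hK : 0 ≤ K) (hle : ∀ p ∈ s, ∀ q ∈ s, f p q ≤ K)
    (hzero : ∀ p ∈ s, ∀ q ∈ s, ¬ R p q → f p q = 0)
    {n : ℕ} (hcard : ∀ p ∈ s, #{q ∈ s | R p q} ≤ n) :
    ∑ p ∈ s, ∑ q ∈ s, f p q ≤ #s * n * K := by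
  have hrow : ∀ p ∈ s, ∑ q ∈ s, f p q ≤ n * K := fun p hp => calc
    ∑ q ∈ s, f p q = ∑ q ∈ s with R p q, f p q :=
      (sum_filter_of_ne fun q hq hf => not_not.1 fun h => hf (hzero p hp q hq h)).symm
    _ ≤ #{q ∈ s | R p q} * K := by
      simpa using sum_le_card_nsmul _ _ K fun q hq => hle p hp q (mem_filter.1 hq).1
    _ ≤ n * K := by gcongr; exact hcard p hp
  simpa [mul_assoc] using sum_le_card_nsmul s _ _ hrow

def Interacts {α β : Type*} (p q : α × β × β) : Prop :=
  p.1 = q.1 ∨ p.2.1 = q.2.1 ∨ p.2.1 = q.2.2 ∨ p.2.2 = q.2.1 ∨ p.2.2 = q.2.2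

instance {α β : Type*} [DecidableEq α] [DecidableEq β] :
    DecidableRel (Interacts : α × β × β → α × β × β → Prop) :=
  fun _ _ => inferInstanceAs (Decidable (_ ∨ _))

lemma not_interacts {α β : Type*} {p q : α × β × β} (h : ¬ Interacts p q) :
    p.1 ≠ q.1 ∧ ({p.2.1, p.2.2} : Set β) ∩ {q.2.1, q.2.2} = ∅ := by
  simp only [Interacts, not_or] at h
  refine ⟨h.1, Set.eq_empty_of_forall_notMem fun x hx => ?_⟩
  simp only [Set.mem_inter_iff, Set.mem_insert_iff, Set.mem_singleton_iff] at hx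
  grind

lemma card_filter_interacts_le {α β : Type*} [DecidableEq α] [DecidableEq β]
    (A : Finset α) (B : Finset β) (p : α × β × β) :
    #{q ∈ A ×ˢ B ×ˢ B | Interacts p q} ≤ #B ^ 2 + 4 * (#A * #B) := by
  obtain ⟨a, b, c⟩ := p
  have hsub : {q ∈ A ×ˢ B ×ˢ B | Interacts (a, b, c) q} ⊆ {a} ×ˢ B ×ˢ B ∪ A ×ˢ {b} ×ˢ B ∪
      A ×ˢ B ×ˢ {b} ∪ A ×ˢ {c} ×ˢ B ∪ A ×ˢ B ×ˢ {c} := by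
    rintro ⟨a', b', c'⟩ hq
    simp only [Interacts] at hq
    simp only [mem_union, mem_product, mem_singleton]
    grind
  grw [card_le_card hsub, card_union_le, card_union_le, card_union_le, card_union_le]
  simp only [card_product, card_singleton]
  linarith

/-- **Variance bound for a triple-indexed sum via covariance counting**: if all
covariances are bounded by `K` and covariances vanish whenever the first indices
differ and the column-index sets are disjoint, then
`Var((NM²)^{-1}·Σᵢ Σⱼ Σₖ T_{i,j,k}) ≤ K·(1/N + 4/M)`. -/
theorem stmt11
    {Ω : Type*} [MeasurableSpace Ω] (P : Measure Ω) [IsProbabilityMeasure P]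
    (N M : ℕ) (hN : 1 ≤ N) (hM : 1 ≤ M)
    (T : ℕ → ℕ → ℕ → Ω → ℝ)
    (hL2 : ∀ i ∈ Finset.Icc 1 N, ∀ j ∈ Finset.Icc 1 M, ∀ k ∈ Finset.Icc 1 M,
      MemLp (T i j k) 2 P)
    (K : ℝ) (hK : 0 ≤ K)
    (hbound : ∀ i ∈ Finset.Icc 1 N, ∀ j ∈ Finset.Icc 1 M, ∀ k ∈ Finset.Icc 1 M,
      ∀ i' ∈ Finset.Icc 1 N, ∀ l ∈ Finset.Icc 1 M, ∀ m ∈ Finset.Icc 1 M,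
        |cov P (T i j k) (T i' l m)| ≤ K)
    (hzero : ∀ i ∈ Finset.Icc 1 N, ∀ j ∈ Finset.Icc 1 M, ∀ k ∈ Finset.Icc 1 M,
      ∀ i' ∈ Finset.Icc 1 N, ∀ l ∈ Finset.Icc 1 M, ∀ m ∈ Finset.Icc 1 M,
        i ≠ i' → ({j, k} : Set ℕ) ∩ {l, m} = ∅ →
          cov P (T i j k) (T i' l m) = 0) :
    var P (fun ω => ((N : ℝ) * (M : ℝ) ^ 2)⁻¹ *
        ∑ i ∈ Finset.Icc 1 N, ∑ j ∈ Finset.Icc 1 M, ∑ k ∈ Finset.Icc 1 M,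
          T i j k ω)
      ≤ K * (1 / N + 4 / M) := by
  set s := Icc 1 N ×ˢ Icc 1 M ×ˢ Icc 1 M
  have hmem {p : ℕ × ℕ × ℕ} (hp : p ∈ s) : p.1 ∈ Icc 1 N ∧ p.2.1 ∈ Icc 1 M ∧ p.2.2 ∈ Icc 1 M := by
    simpa [s] using hp
  have hsum (ω : Ω) : ∑ i ∈ Icc 1 N, ∑ j ∈ Icc 1 M, ∑ k ∈ Icc 1 M, T i j k ω
      = ∑ p ∈ s, T p.1 p.2.1 p.2.2 ω := by
    simp only [s, sum_product]
  simp_rw [hsum]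
  rw [var_const_mul_sum fun p hp => hL2 _ (hmem hp).1 _ (hmem hp).2.1 _ (hmem hp).2.2]
  have hpairs := sum_sum_le_of_sparse_rows (s := s) Interacts
    (f := fun p q => cov P (T p.1 p.2.1 p.2.2) (T q.1 q.2.1 q.2.2)) hK
    (fun p hp q hq => le_of_abs_le (hbound _ (hmem hp).1 _ (hmem hp).2.1 _ (hmem hp).2.2
      _ (hmem hq).1 _ (hmem hq).2.1 _ (hmem hq).2.2))
    (fun p hp q hq hpq => hzero _ (hmem hp).1 _ (hmem hp).2.1 _ (hmem hp).2.2
      _ (hmem hq).1 _ (hmem hq).2.1 _ (hmem hq).2.2 (not_interacts hpq).1 (not_interacts hpq).2)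
    (fun p _ => card_filter_interacts_le _ _ p)
  have hN' : (0 : ℝ) < N := by exact_mod_cast hN
  have hM' : (0 : ℝ) < M := by exact_mod_cast hM
  calc _ ≤ _ := mul_le_mul_of_nonneg_left hpairs (sq_nonneg _)
    _ = K * (1 / N + 4 / M) := by
        simp only [s, card_product, Nat.card_Icc, add_tsub_cancel_right]
        push_cast
        field_simp
end

section
/- There exist universal constants c > 0 and C' > 0 such that the following holds: for all integers n ≥ 2 and p ≥ 1 and all independent random vectors X₁, …, X_n in ℝ^p with B := √(E[max_{1≤i≤n} ‖X_i‖_∞²]) < ∞ and σ² := max_{1≤j≤p} (1/n)·Σ_{i=1}^n E[X_{ij}²], one has, with probability at least 1 − C'·(log n)^{-1}, max_{1≤j≤p} |(1/n)·Σ_{i=1}^n (|X_{ij}| − E[|X_{ij}|])| ≤ c·(√(σ²·log(p∨n)/n) + B·log(p∨n)/n). -/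
/-!
Split each coordinate at a level `τ`: `|X_ij| = min |X_ij| τ + (|X_ij| - min |X_ij| τ)`.
The truncated parts are bounded by `τ` and have variance at most `E X_ij²`, so a Chernoff bound
at `t = 1/τ` and a union bound over the `p` coordinates control them with probability
`1 - O(1/n)`. For the excess parts, Markov's inequality shows that no `‖X_i‖_∞` exceeds `2B`
with probability at least `3/4`; by independence this probability is `∏ (1 - qᵢ) ≤ exp (-∑ qᵢ)`,
so the exceedance probabilities satisfy `∑ qᵢ ≤ 1`. A Chernoff bound then gives at most `√L`
exceedances, and Markov's inequality gives `maxᵢ ‖X_i‖_∞ ≤ B √L`, both with probability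
`1 - O(1/L)`. On these events the excess sum is at most `B L`, and its mean is at most
`∑ᵢ E X_ij² / τ`. With `L = log (p ∨ n)`, `K = √(n σ² L)` and `τ = max (K / L) (2B)`, all terms
are `O(K + B L)`.
-/

open MeasureTheory ProbabilityTheory Real Finset

lemma sub_min_le_sq_div {x τ : ℝ} (hτ : 0 < τ) (hx : 0 ≤ x) : x - min x τ ≤ x ^ 2 / τ := by
  rw [le_div_iff₀ hτ]
  rcases le_total x τ with h | h
  · rw [min_eq_left h, sub_self, zero_mul]; positivity
  · rw [min_eq_right h]; nlinarith

lemma sum_abs_sub_min_le_mul_card {ι κ : Type*} [Fintype ι] [Fintype κ] (x : ι → κ → ℝ) (j : κ)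
    {θ τ M : ℝ} (hτ : 0 ≤ τ) (hθτ : θ ≤ τ) (hM : ∀ i, ‖x i‖ ≤ M) :
    ∑ i, (|x i j| - min |x i j| τ) ≤ M * #{i | θ < ‖x i‖} := by
  have h_coord (i : ι) : |x i j| ≤ ‖x i‖ := norm_le_pi_norm (x i) j
  calc ∑ i, (|x i j| - min |x i j| τ) ≤ ∑ i, if θ < ‖x i‖ then M else 0 := by
        refine sum_le_sum fun i _ => ?_
        split_ifs with h
        · have := h_coord i; have := hM i
          rcases le_total |x i j| τ with h' | h'
          · rw [min_eq_left h']; linarith [norm_nonneg (x i)]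
          · rw [min_eq_right h']; linarith
        · rw [min_eq_left ((h_coord i).trans ((not_lt.1 h).trans hθτ)), sub_self]
    _ = M * #{i | θ < ‖x i‖} := by
        rw [sum_ite, sum_const_zero, add_zero, sum_const, nsmul_eq_mul, mul_comm]

lemma sq_apply_le_iSup_norm_sq {ι κ : Type*} [Finite ι] [Fintype κ] (x : ι → κ → ℝ) (i : ι)
    (j : κ) : x i j ^ 2 ≤ ⨆ i, ‖x i‖ ^ 2 := by
  refine le_trans ?_ (le_ciSup (Finite.bddAbove_range fun i => ‖x i‖ ^ 2) i)
  rw [← sq_abs]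
  exact pow_le_pow_left₀ (abs_nonneg _) (norm_le_pi_norm (x i) j) 2

lemma card_mul_two_mul_exp_neg_two_mul_log_max_le {n : ℕ} (hn : 2 ≤ n) (p : ℕ) :
    (p : ℝ) * (2 * exp (-2 * log (max p n))) ≤ 2 / log n := by
  have hn0 : (0 : ℝ) < n := by positivity
  have hpM : (p : ℝ) ≤ max (p : ℝ) n := le_max_left _ _
  have hnM : (n : ℝ) ≤ max (p : ℝ) n := le_max_right _ _
  have hM : 0 < max (p : ℝ) n := hn0.trans_le hnM
  have hlog : 0 < log n := log_pos (by exact_mod_cast hn)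
  rw [mul_comm (-2 : ℝ), exp_mul, exp_log hM]
  calc (p : ℝ) * (2 * max (p : ℝ) n ^ (-2 : ℝ))
      = 2 * (p / max (p : ℝ) n) * (max (p : ℝ) n)⁻¹ := by
        rw [rpow_neg hM.le, rpow_two]; field_simp
    _ ≤ 2 * 1 * (n : ℝ)⁻¹ := by
        gcongr
        exact div_le_one_of_le₀ hpM hM.le
    _ ≤ 2 / log n := by
        rw [mul_one, ← div_eq_mul_inv]
        gcongr
        linarith [log_le_sub_one_of_pos hn0]

lemma exp_two_sub_sqrt_le {L : ℝ} (hL : 0 < L) : exp (2 - √L) ≤ 16 / L := by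
  have h_exp_two : exp 2 ≤ 8 := by
    have : exp 2 = exp 1 * exp 1 := by rw [← exp_add]; norm_num
    nlinarith [exp_one_lt_d9, exp_pos 1]
  have h_exp_sqrt : L / 2 ≤ exp √L := by
    have := quadratic_le_exp_of_nonneg (sqrt_nonneg L)
    rw [sq_sqrt hL.le] at this
    linarith [sqrt_nonneg L]
  rw [exp_sub, div_le_div_iff₀ (exp_pos _) hL]
  nlinarith

namespace ProbabilityTheory

variable {Ω ι : Type*} [MeasurableSpace Ω] {P : Measure Ω}

lemma measureReal_mul_le_le_one_div {f : Ω → ℝ} (hf_nonneg : ∀ ω, 0 ≤ f ω)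
    (hf : Integrable f P) {c L : ℝ} (hc : 0 < c) (hL : 0 < L) (hfc : ∫ ω, f ω ∂P ≤ c) :
    P.real {ω | c * L ≤ f ω} ≤ 1 / L := by
  have h_markov := mul_meas_ge_le_integral_of_nonneg (ae_of_all _ hf_nonneg) hf (c * L)
  rw [le_div_iff₀ hL]
  nlinarith

section Moments

variable {κ : Type*} [Fintype ι] [Fintype κ] {X : ι → Ω → κ → ℝ}

lemma integrable_sq_apply (hX : ∀ i, Measurable (X i))
    (hS : Integrable (fun ω => ⨆ i, ‖X i ω‖ ^ 2) P) (i : ι) (j : κ) :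
    Integrable (fun ω => X i ω j ^ 2) P :=
  hS.mono' (((measurable_pi_apply j).comp (hX i)).pow_const 2).aestronglyMeasurable
    (ae_of_all _ fun ω => by
      rw [norm_of_nonneg (sq_nonneg _)]; exact sq_apply_le_iSup_norm_sq (X · ω) i j)

lemma ae_eq_zero_of_integral_iSup_norm_sq_eq_zero
    (hS : Integrable (fun ω => ⨆ i, ‖X i ω‖ ^ 2) P) (h0 : ∫ ω, ⨆ i, ‖X i ω‖ ^ 2 ∂P = 0) :
    ∀ᵐ ω ∂P, ∀ i, X i ω = 0 := by
  filter_upwards [(integral_eq_zero_iff_of_nonneg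
    (fun ω => Real.iSup_nonneg fun i => sq_nonneg ‖X i ω‖) hS).1 h0] with ω hω i
  have := le_ciSup (Finite.bddAbove_range fun i => ‖X i ω‖ ^ 2) i
  simp only [Pi.zero_apply] at hω
  rw [hω] at this
  simpa using le_antisymm this (sq_nonneg _)

end Moments

variable [IsProbabilityMeasure P]

lemma one_sub_measureReal_le_of_compl_subset {A B : Set Ω} (h : Aᶜ ⊆ B) :
    1 - P.real B ≤ P.real A := by
  have h_univ : P.real Set.univ ≤ P.real A + P.real Aᶜ := by
    rw [← Set.union_compl_self A]; exact measureReal_union_le _ _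
  linarith [probReal_univ (μ := P), measureReal_mono h (μ := P)]

lemma mgf_le_exp_mul_integral_sq {ξ : Ω → ℝ} {b t : ℝ} (hξ : Measurable ξ)
    (hbd : ∀ ω, |ξ ω| ≤ b) (hmean : ∫ ω, ξ ω ∂P = 0) (ht : 0 ≤ t) (htb : t * b ≤ 1) :
    mgf ξ P t ≤ exp (t ^ 2 * ∫ ω, ξ ω ^ 2 ∂P) := by
  have htξ (ω : Ω) : |t * ξ ω| ≤ 1 := by
    rw [abs_mul, abs_of_nonneg ht]
    exact (mul_le_mul_of_nonneg_left (hbd ω) ht).trans htb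
  have hL2 : MemLp ξ 2 P := memLp_of_bounded (a := -b) (b := b)
    (ae_of_all _ fun ω => abs_le.1 (hbd ω)) hξ.aestronglyMeasurable 2
  have hint : Integrable ξ P := hL2.integrable one_le_two
  have hint_sq : Integrable (fun ω => ξ ω ^ 2) P := hL2.integrable_sq
  have hint_lin : Integrable (fun ω => 1 + t * ξ ω) P := (integrable_const 1).add (hint.const_mul t)
  have hint_exp : Integrable (fun ω => exp (t * ξ ω)) P := integrable_exp_mul_of_le t b ht
    hξ.aemeasurable (ae_of_all _ fun ω => (le_abs_self _).trans (hbd ω))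
  calc mgf ξ P t ≤ ∫ ω, (1 + t * ξ ω + t ^ 2 * ξ ω ^ 2) ∂P := by
        refine integral_mono hint_exp (hint_lin.add (hint_sq.const_mul _)) fun ω => ?_
        have := (abs_le.1 (abs_exp_sub_one_sub_id_le (htξ ω))).2
        dsimp only
        nlinarith
    _ = 1 + t ^ 2 * ∫ ω, ξ ω ^ 2 ∂P := by
        rw [integral_add hint_lin (hint_sq.const_mul _),
          integral_add (integrable_const 1) (hint.const_mul _), integral_const_mul,
          integral_const_mul, hmean]
        simp
    _ ≤ exp (t ^ 2 * ∫ ω, ξ ω ^ 2 ∂P) := by linarith [add_one_le_exp (t ^ 2 * ∫ ω, ξ ω ^ 2 ∂P)]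

lemma measureReal_le_sum_le_exp [Fintype ι] {ξ : ι → Ω → ℝ} {b t v : ℝ}
    (hξ : ∀ i, Measurable (ξ i)) (hindep : iIndepFun ξ P) (hbd : ∀ i ω, |ξ i ω| ≤ b)
    (hmean : ∀ i, ∫ ω, ξ i ω ∂P = 0) (hvar : ∑ i, ∫ ω, ξ i ω ^ 2 ∂P ≤ v)
    (ht : 0 ≤ t) (htb : t * b ≤ 1) (s : ℝ) :
    P.real {ω | s ≤ ∑ i, ξ i ω} ≤ exp (t ^ 2 * v - t * s) := by
  have hint_exp (i : ι) : Integrable (fun ω => exp (t * ξ i ω)) P :=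
    integrable_exp_mul_of_le t b ht (hξ i).aemeasurable
      (ae_of_all _ fun ω => (le_abs_self _).trans (hbd i ω))
  have hchernoff := measure_ge_le_exp_mul_mgf s ht
    (hindep.integrable_exp_mul_sum hξ (s := univ) fun i _ => hint_exp i)
  simp only [Finset.sum_apply] at hchernoff
  calc P.real {ω | s ≤ ∑ i, ξ i ω} ≤ exp (-t * s) * mgf (∑ i, ξ i) P t := hchernoff
    _ ≤ exp (-t * s) * exp (t ^ 2 * v) := by
        gcongr
        rw [hindep.mgf_sum hξ]
        calc ∏ i, mgf (ξ i) P t ≤ ∏ i, exp (t ^ 2 * ∫ ω, ξ i ω ^ 2 ∂P) :=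
              prod_le_prod (fun i _ => mgf_nonneg) fun i _ =>
                mgf_le_exp_mul_integral_sq (hξ i) (hbd i) (hmean i) ht htb
          _ ≤ exp (t ^ 2 * v) := by
              rw [← exp_sum, ← mul_sum]
              gcongr
    _ = exp (t ^ 2 * v - t * s) := by rw [← exp_add]; ring_nf

lemma measureReal_le_abs_sum_le_two_mul_exp [Fintype ι] {ξ : ι → Ω → ℝ} {b t v : ℝ}
    (hξ : ∀ i, Measurable (ξ i)) (hindep : iIndepFun ξ P) (hbd : ∀ i ω, |ξ i ω| ≤ b)
    (hmean : ∀ i, ∫ ω, ξ i ω ∂P = 0) (hvar : ∑ i, ∫ ω, ξ i ω ^ 2 ∂P ≤ v)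
    (ht : 0 ≤ t) (htb : t * b ≤ 1) (s : ℝ) :
    P.real {ω | s ≤ |∑ i, ξ i ω|} ≤ 2 * exp (t ^ 2 * v - t * s) := by
  have hneg := measureReal_le_sum_le_exp (ξ := fun i ω => -ξ i ω) (fun i => (hξ i).neg)
    (hindep.comp (fun _ => Neg.neg) fun _ => measurable_neg) (by simpa using hbd)
    (by simpa [integral_neg] using hmean) (by simpa using hvar) ht htb s
  calc P.real {ω | s ≤ |∑ i, ξ i ω|}
      ≤ P.real ({ω | s ≤ ∑ i, ξ i ω} ∪ {ω | s ≤ ∑ i, -ξ i ω}) := by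
        refine measureReal_mono fun ω hω => ?_
        simp only [Set.mem_ofPred_eq, Set.mem_union, sum_neg_distrib] at hω ⊢
        exact le_abs.1 hω
    _ ≤ 2 * exp (t ^ 2 * v - t * s) := by
        linarith [measureReal_union_le (μ := P) {ω | s ≤ ∑ i, ξ i ω} {ω | s ≤ ∑ i, -ξ i ω},
          measureReal_le_sum_le_exp hξ hindep hbd hmean hvar ht htb s]

section Events

variable {β : Type*} [MeasurableSpace β] [Fintype ι] {Y : ι → Ω → β} {S : Set β}

lemma measureReal_forall_notMem_le_exp_neg_sum (hY : ∀ i, Measurable (Y i))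
    (hindep : iIndepFun Y P) (hS : MeasurableSet S) :
    P.real {ω | ∀ i, Y i ω ∉ S} ≤ exp (-∑ i, P.real {ω | Y i ω ∈ S}) := by
  have hprod : P.real {ω | ∀ i, Y i ω ∉ S} = ∏ i, (1 - P.real {ω | Y i ω ∈ S}) := by
    have hset : {ω | ∀ i, Y i ω ∉ S} = ⋂ i, Y i ⁻¹' Sᶜ := by ext; simp
    rw [hset, measureReal_def, hindep.meas_iInter fun i => ⟨Sᶜ, hS.compl, rfl⟩,
      ENNReal.toReal_prod]
    exact prod_congr rfl fun i _ => probReal_compl_eq_one_sub (hY i hS)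
  rw [hprod, ← sum_neg_distrib, exp_sum]
  exact prod_le_prod (fun i _ => sub_nonneg.2 measureReal_le_one) fun i _ => one_sub_le_exp_neg _

lemma measureReal_le_card_le_exp [DecidablePred (· ∈ S)] (hY : ∀ i, Measurable (Y i))
    (hindep : iIndepFun Y P) (hS : MeasurableSet S) (t : ℝ) :
    P.real {ω | t ≤ #{i | Y i ω ∈ S}} ≤ exp (2 * ∑ i, P.real {ω | Y i ω ∈ S} - t) := by
  set Z : ι → Ω → ℝ := fun i => (Y i ⁻¹' S).indicator 1
  have hZ (i : ι) : Measurable (Z i) := measurable_const.indicator (hY i hS)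
  have hZ_int (i : ι) : Integrable (Z i) P := (integrable_const 1).indicator (hY i hS)
  have hZ_le (i : ι) (ω : Ω) : Z i ω ≤ 1 := by
    by_cases h : ω ∈ Y i ⁻¹' S <;> simp [Z, h]
  have hZ_exp_int (i : ι) : Integrable (fun ω => exp (1 * Z i ω)) P :=
    integrable_exp_mul_of_le 1 1 zero_le_one (hZ i).aemeasurable (ae_of_all _ (hZ_le i))
  have hZ_indep : iIndepFun Z P := by
    convert hindep.comp (fun _ => S.indicator (1 : β → ℝ))
      fun _ => measurable_const.indicator hS using 1
    ext i ω
    by_cases h : Y i ω ∈ S <;> simp [Z, h]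
  have hcard (ω : Ω) : (#{i | Y i ω ∈ S} : ℝ) = ∑ i, Z i ω := by
    rw [natCast_card_filter]
    refine sum_congr rfl fun i _ => ?_
    by_cases h : Y i ω ∈ S <;> simp [Z, h]
  have hmgf (i : ι) : mgf (Z i) P 1 ≤ exp (2 * P.real {ω | Y i ω ∈ S}) := by
    calc mgf (Z i) P 1 ≤ ∫ ω, (1 + 2 * Z i ω) ∂P := by
          refine integral_mono (hZ_exp_int i)
            ((integrable_const 1).add ((hZ_int i).const_mul 2)) fun ω => ?_
          by_cases h : ω ∈ Y i ⁻¹' S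
          · simp only [Z, Set.indicator_of_mem h, Pi.one_apply, one_mul]
            linarith [exp_one_lt_d9]
          · simp [Z, Set.indicator_of_notMem h]
      _ = 1 + 2 * P.real {ω | Y i ω ∈ S} := by
          rw [integral_add (integrable_const 1) ((hZ_int i).const_mul 2), integral_const_mul,
            integral_indicator_one (hY i hS), integral_const, probReal_univ, one_smul]
          rfl
      _ ≤ exp (2 * P.real {ω | Y i ω ∈ S}) := by
          linarith [add_one_le_exp (2 * P.real {ω | Y i ω ∈ S})]
  have hchernoff := measure_ge_le_exp_mul_mgf t zero_le_one
    (hZ_indep.integrable_exp_mul_sum hZ (s := univ) fun i _ => hZ_exp_int i)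
  simp only [Finset.sum_apply, ← hcard] at hchernoff
  calc P.real {ω | t ≤ #{i | Y i ω ∈ S}} ≤ exp (-1 * t) * mgf (∑ i, Z i) P 1 := hchernoff
    _ ≤ exp (-1 * t) * exp (2 * ∑ i, P.real {ω | Y i ω ∈ S}) := by
        gcongr
        rw [hZ_indep.mgf_sum hZ, mul_sum, exp_sum]
        exact prod_le_prod (fun i _ => mgf_nonneg) fun i _ => hmgf i
    _ = exp (2 * ∑ i, P.real {ω | Y i ω ∈ S} - t) := by rw [← exp_add]; ring_nf

end Events

lemma integral_sq_sub_integral_le {f g : Ω → ℝ} (hf : Measurable f)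
    (hg : Integrable (fun ω => g ω ^ 2) P) (hfg : ∀ ω, |f ω| ≤ |g ω|) :
    ∫ ω, (f ω - ∫ ω', f ω' ∂P) ^ 2 ∂P ≤ ∫ ω, g ω ^ 2 ∂P := by
  have hfg_sq (ω : Ω) : f ω ^ 2 ≤ g ω ^ 2 := sq_le_sq.2 (hfg ω)
  calc ∫ ω, (f ω - ∫ ω', f ω' ∂P) ^ 2 ∂P = variance f P :=
        (variance_eq_integral hf.aemeasurable).symm
    _ ≤ ∫ ω, f ω ^ 2 ∂P := variance_le_expectation_sq hf.aestronglyMeasurable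
    _ ≤ ∫ ω, g ω ^ 2 ∂P := by
        refine integral_mono (hg.mono' (hf.pow_const 2).aestronglyMeasurable
          (ae_of_all _ fun ω => ?_)) hg hfg_sq
        rw [norm_of_nonneg (sq_nonneg _)]; exact hfg_sq ω

lemma integral_abs_sub_integral_min_mem_Icc {Y : Ω → ℝ} {τ : ℝ} (hτ : 0 < τ)
    (hY : Measurable Y) (hY_sq : Integrable (fun ω => Y ω ^ 2) P) :
    ∫ ω, |Y ω| ∂P - ∫ ω, min |Y ω| τ ∂P ∈ Set.Icc 0 ((∫ ω, Y ω ^ 2 ∂P) / τ) := by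
  have h_abs : Integrable (fun ω => |Y ω|) P :=
    ((memLp_two_iff_integrable_sq hY.aestronglyMeasurable).2 hY_sq |>.integrable one_le_two).abs
  have h_min : Integrable (fun ω => min |Y ω| τ) P := h_abs.inf (integrable_const τ)
  rw [← integral_sub h_abs h_min, ← integral_div]
  refine ⟨integral_nonneg fun ω => sub_nonneg.2 (min_le_left _ _),
    integral_mono (h_abs.sub h_min) (hY_sq.div_const τ) fun ω => ?_⟩
  simpa only [sq_abs] using sub_min_le_sq_div hτ (abs_nonneg (Y ω))

lemma abs_sum_abs_sub_integral_le [Fintype ι] {Y : ι → Ω → ℝ} {τ : ℝ} (hτ : 0 < τ)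
    (hY : ∀ i, Measurable (Y i)) (hY_sq : ∀ i, Integrable (fun ω => Y i ω ^ 2) P) (ω : Ω) :
    |∑ i, (|Y i ω| - ∫ ω', |Y i ω'| ∂P)|
      ≤ |∑ i, (min |Y i ω| τ - ∫ ω', min |Y i ω'| τ ∂P)| + ∑ i, (|Y i ω| - min |Y i ω| τ)
        + (∑ i, ∫ ω', Y i ω' ^ 2 ∂P) / τ := by
  have h_tail := fun i => integral_abs_sub_integral_min_mem_Icc hτ (hY i) (hY_sq i)
  have h_mean_nonneg : 0 ≤ ∑ i, (∫ ω', |Y i ω'| ∂P - ∫ ω', min |Y i ω'| τ ∂P) :=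
    sum_nonneg fun i _ => (h_tail i).1
  have h_mean_le : ∑ i, (∫ ω', |Y i ω'| ∂P - ∫ ω', min |Y i ω'| τ ∂P)
      ≤ (∑ i, ∫ ω', Y i ω' ^ 2 ∂P) / τ := by
    rw [sum_div]; exact sum_le_sum fun i _ => (h_tail i).2
  have h_excess_nonneg : 0 ≤ ∑ i, (|Y i ω| - min |Y i ω| τ) :=
    sum_nonneg fun i _ => sub_nonneg.2 (min_le_left _ _)
  have h_split : ∑ i, (|Y i ω| - ∫ ω', |Y i ω'| ∂P)
      = ∑ i, (min |Y i ω| τ - ∫ ω', min |Y i ω'| τ ∂P) + ∑ i, (|Y i ω| - min |Y i ω| τ)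
        - ∑ i, (∫ ω', |Y i ω'| ∂P - ∫ ω', min |Y i ω'| τ ∂P) := by
    rw [← sum_add_distrib, ← sum_sub_distrib]; exact sum_congr rfl fun i _ => by ring
  set A := ∑ i, (min |Y i ω| τ - ∫ ω', min |Y i ω'| τ ∂P)
  rw [h_split, abs_le]
  constructor <;> linarith [neg_abs_le A, le_abs_self A]

lemma measureReal_exists_le_abs_sum_truncation_le [Fintype ι] {κ : Type*} [Fintype κ]
    {X : ι → Ω → κ → ℝ} {τ v : ℝ} (hX : ∀ i, Measurable (X i)) (hindep : iIndepFun X P)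
    (hτ : 0 < τ) (hX_sq : ∀ i j, Integrable (fun ω => X i ω j ^ 2) P)
    (hv : ∀ j, ∑ i, ∫ ω, X i ω j ^ 2 ∂P ≤ v) (s : ℝ) :
    P.real {ω | ∃ j, s ≤ |∑ i, (min |X i ω j| τ - ∫ ω', min |X i ω' j| τ ∂P)|}
      ≤ Fintype.card κ * (2 * exp ((v / τ - s) / τ)) := by
  set m : ι → κ → ℝ := fun i j => ∫ ω', min |X i ω' j| τ ∂P
  have ha (i : ι) (j : κ) : Measurable fun ω => min |X i ω j| τ :=
    ((measurable_pi_apply j).comp (hX i)).abs.min measurable_const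
  have ha_nonneg (i : ι) (j : κ) (ω : Ω) : 0 ≤ min |X i ω j| τ := le_min (abs_nonneg _) hτ.le
  have ha_int (i : ι) (j : κ) : Integrable (fun ω => min |X i ω j| τ) P :=
    Integrable.of_bound (ha i j).aestronglyMeasurable τ (ae_of_all _ fun ω => by
      rw [norm_of_nonneg (ha_nonneg i j ω)]; exact min_le_right _ _)
  have hm (i : ι) (j : κ) : 0 ≤ m i j ∧ m i j ≤ τ :=
    ⟨integral_nonneg (ha_nonneg i j),
      (integral_mono (ha_int i j) (integrable_const τ) fun ω => min_le_right _ _).trans_eq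
        (by simp)⟩
  have h_coord (j : κ) : P.real {ω | s ≤ |∑ i, (min |X i ω j| τ - m i j)|}
      ≤ 2 * exp ((v / τ - s) / τ) := by
    have h := measureReal_le_abs_sum_le_two_mul_exp (P := P)
      (ξ := fun i ω => min |X i ω j| τ - m i j) (b := τ) (t := τ⁻¹) (v := v)
      (fun i => (ha i j).sub_const _)
      (hindep.comp (fun i x => min |x j| τ - m i j)
        fun i => ((measurable_pi_apply j).abs.min measurable_const).sub_const _)
      (fun i ω => abs_sub_le_of_nonneg_of_le (ha_nonneg i j ω) (min_le_right _ _)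
        (hm i j).1 (hm i j).2)
      (fun i => by simp [integral_sub (ha_int i j) (integrable_const _), m])
      ((sum_le_sum fun i _ => integral_sq_sub_integral_le (ha i j) (hX_sq i j) fun ω => by
        rw [abs_of_nonneg (ha_nonneg i j ω)]; exact min_le_left _ _).trans (hv j))
      (inv_nonneg.2 hτ.le) (inv_mul_cancel₀ hτ.ne').le s
    convert h using 3
    field_simp
  rw [Set.ofPred_exists]
  refine (measureReal_iUnion_fintype_le _).trans ?_
  simpa using sum_le_sum fun j (_ : j ∈ univ) => h_coord j

section Coordinates

variable {κ : Type*} [Fintype ι] [Fintype κ] {X : ι → Ω → κ → ℝ}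

lemma measureReal_iSup_abs_mul_sum_abs_sub_integral_le_eq_one
    (hS : Integrable (fun ω => ⨆ i, ‖X i ω‖ ^ 2) P) (h0 : ∫ ω, ⨆ i, ‖X i ω‖ ^ 2 ∂P = 0)
    (a : ℝ) {R : ℝ} (hR : 0 ≤ R) :
    P.real {ω | (⨆ j, |a * ∑ i, (|X i ω j| - ∫ ω', |X i ω' j| ∂P)|) ≤ R} = 1 := by
  have h_zero := ae_eq_zero_of_integral_iSup_norm_sq_eq_zero hS h0
  have h_mean (i : ι) (j : κ) : ∫ ω, |X i ω j| ∂P = 0 :=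
    integral_eq_zero_of_ae (by filter_upwards [h_zero] with ω hω; simp [hω i])
  have h_null : P.real {ω | ¬ ∀ i, X i ω = 0} = 0 := by
    rw [measureReal_def, ae_iff.1 h_zero, ENNReal.toReal_zero]
  refine le_antisymm measureReal_le_one ?_
  refine le_trans (by rw [h_null, sub_zero]) (one_sub_measureReal_le_of_compl_subset
    (B := {ω | ¬ ∀ i, X i ω = 0}) fun ω hω hω0 => hω ?_)
  simp [hω0, h_mean, hR]

lemma sum_measureReal_two_mul_lt_norm_le_one (hX : ∀ i, Measurable (X i))
    (hindep : iIndepFun X P) (hS : Integrable (fun ω => ⨆ i, ‖X i ω‖ ^ 2) P) {B : ℝ}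
    (hB : 0 < B) (hB_sq : ∫ ω, ⨆ i, ‖X i ω‖ ^ 2 ∂P ≤ B ^ 2) :
    ∑ i, P.real {ω | X i ω ∈ {x | 2 * B < ‖x‖}} ≤ 1 := by
  set q := ∑ i, P.real {ω | X i ω ∈ {x | 2 * B < ‖x‖}}
  have h_rare := measureReal_mul_le_le_one_div
    (fun ω => Real.iSup_nonneg fun i => sq_nonneg ‖X i ω‖) hS (by positivity) four_pos hB_sq
  have h_none : 1 - P.real {ω | B ^ 2 * 4 ≤ ⨆ i, ‖X i ω‖ ^ 2}
      ≤ P.real {ω | ∀ i, X i ω ∉ {x | 2 * B < ‖x‖}} := by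
    refine one_sub_measureReal_le_of_compl_subset fun ω hω => ?_
    obtain ⟨i, hi⟩ : ∃ i, 2 * B < ‖X i ω‖ := by simpa using hω
    calc B ^ 2 * 4 = (2 * B) ^ 2 := by ring
      _ ≤ ‖X i ω‖ ^ 2 := pow_le_pow_left₀ (by positivity) hi.le 2
      _ ≤ ⨆ i, ‖X i ω‖ ^ 2 := le_ciSup (Finite.bddAbove_range fun i => ‖X i ω‖ ^ 2) i
  have h_exp : 3 / 4 ≤ exp (-q) := by
    refine le_trans ?_ (h_none.trans (measureReal_forall_notMem_le_exp_neg_sum hX hindep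
      (measurableSet_lt measurable_const measurable_norm)))
    linarith
  have h_cancel : exp (-q) * exp q = 1 := by rw [← exp_add, neg_add_cancel, exp_zero]
  nlinarith [add_one_le_exp q, exp_pos q]

lemma measureReal_sqrt_le_card_two_mul_lt_norm_le (hX : ∀ i, Measurable (X i))
    (hindep : iIndepFun X P) (hS : Integrable (fun ω => ⨆ i, ‖X i ω‖ ^ 2) P) {B L : ℝ}
    (hB : 0 < B) (hL : 0 < L) (hB_sq : ∫ ω, ⨆ i, ‖X i ω‖ ^ 2 ∂P ≤ B ^ 2) :
    P.real {ω | √L ≤ #{i | X i ω ∈ {x | 2 * B < ‖x‖}}} ≤ 16 / L := by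
  refine (measureReal_le_card_le_exp hX hindep
    (measurableSet_lt measurable_const measurable_norm) √L).trans ?_
  refine le_trans ?_ (exp_two_sub_sqrt_le hL)
  gcongr
  linarith [sum_measureReal_two_mul_lt_norm_le_one hX hindep hS hB hB_sq]

lemma abs_sum_abs_sub_integral_le_of_bounds (hX : ∀ i, Measurable (X i))
    (hX_sq : ∀ i j, Integrable (fun ω => X i ω j ^ 2) P) {θ τ s M N v : ℝ} (hτ : 0 < τ)
    (hθτ : θ ≤ τ) (hv : ∀ j, ∑ i, ∫ ω, X i ω j ^ 2 ∂P ≤ v) {ω : Ω}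
    (h_trunc : ∀ j, |∑ i, (min |X i ω j| τ - ∫ ω', min |X i ω' j| τ ∂P)| ≤ s)
    (hM : 0 ≤ M) (h_norm : ∀ i, ‖X i ω‖ ≤ M) (h_card : (#{i | θ < ‖X i ω‖} : ℝ) ≤ N) (j : κ) :
    |∑ i, (|X i ω j| - ∫ ω', |X i ω' j| ∂P)| ≤ s + M * N + v / τ := by
  have h_excess : ∑ i, (|X i ω j| - min |X i ω j| τ) ≤ M * N :=
    (sum_abs_sub_min_le_mul_card (X · ω) j hτ.le hθτ h_norm).trans
      (mul_le_mul_of_nonneg_left h_card hM)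
  have h_mean : (∑ i, ∫ ω', X i ω' j ^ 2 ∂P) / τ ≤ v / τ := by gcongr; exact hv j
  linarith [abs_sum_abs_sub_integral_le (Y := fun i ω => X i ω j) hτ
    (fun i => (measurable_pi_apply j).comp (hX i)) (fun i => hX_sq i j) ω, h_trunc j]

lemma measureReal_exists_lt_abs_sum_abs_sub_integral_le (hX : ∀ i, Measurable (X i))
    (hindep : iIndepFun X P) (hS : Integrable (fun ω => ⨆ i, ‖X i ω‖ ^ 2) P) {B L v : ℝ}
    (hB : 0 < B) (hL : 0 < L) (hB_sq : ∫ ω, ⨆ i, ‖X i ω‖ ^ 2 ∂P ≤ B ^ 2)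
    (hv : ∀ j, ∑ i, ∫ ω, X i ω j ^ 2 ∂P ≤ v) :
    P.real {ω | ∃ j, 4 * √(v * L) + 5 * (B * L) < |∑ i, (|X i ω j| - ∫ ω', |X i ω' j| ∂P)|}
      ≤ Fintype.card κ * (2 * exp (-2 * L)) + 17 / L := by
  have hX_sq := integrable_sq_apply hX hS
  set K := √(v * L)
  set τ := max (K / L) (2 * B)
  -- `s` is chosen so that the Chernoff exponent at `t = 1 / τ` is at most `-2 L`.
  set s := 3 * K + 4 * (B * L)
  have hτ : 0 < τ := lt_max_of_lt_right (by positivity)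
  have hv_le : v / τ ≤ K := by
    have hvK : v ≤ K * (K / L) := by
      rw [← mul_div_assoc, ← sq, le_div_iff₀ hL]
      rcases le_total 0 (v * L) with h | h
      · rw [sq_sqrt h]
      · exact h.trans (sq_nonneg _)
    rw [div_le_iff₀ hτ]
    exact hvK.trans (mul_le_mul_of_nonneg_left (le_max_left _ _) (sqrt_nonneg _))
  have h_exp : (v / τ - s) / τ ≤ -2 * L := by
    have hLτ : L * τ ≤ K + 2 * (B * L) := by
      calc L * τ ≤ L * (K / L + 2 * B) :=
            mul_le_mul_of_nonneg_left (max_le_add_of_nonneg (by positivity) (by positivity)) hL.le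
        _ = K + 2 * (B * L) := by field_simp
    rw [div_le_iff₀ hτ]
    linarith
  have h_trunc := (measureReal_exists_le_abs_sum_truncation_le hX hindep hτ hX_sq hv s).trans
    (by gcongr : (Fintype.card κ : ℝ) * (2 * exp ((v / τ - s) / τ))
      ≤ Fintype.card κ * (2 * exp (-2 * L)))
  have h_card := measureReal_sqrt_le_card_two_mul_lt_norm_le hX hindep hS hB hL hB_sq
  have h_max := measureReal_mul_le_le_one_div
    (fun ω => Real.iSup_nonneg fun i => sq_nonneg ‖X i ω‖) hS (by positivity) hL hB_sq
  have h_incl : {ω | ∃ j, 4 * K + 5 * (B * L) < |∑ i, (|X i ω j| - ∫ ω', |X i ω' j| ∂P)|}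
      ⊆ {ω | ∃ j, s ≤ |∑ i, (min |X i ω j| τ - ∫ ω', min |X i ω' j| τ ∂P)|}
        ∪ {ω | √L ≤ #{i | X i ω ∈ {x | 2 * B < ‖x‖}}} ∪ {ω | B ^ 2 * L ≤ ⨆ i, ‖X i ω‖ ^ 2} := by
    rintro ω ⟨j, hj⟩
    by_contra h_good
    simp only [Set.mem_union, Set.mem_ofPred_eq, not_or, not_exists, not_le] at h_good
    obtain ⟨⟨h_small, h_few⟩, h_max⟩ := h_good
    have h_norm (i : ι) : ‖X i ω‖ ≤ B * √L := by
      rw [← sqrt_sq (norm_nonneg _), ← sqrt_sq hB.le, ← sqrt_mul (sq_nonneg B)]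
      exact sqrt_le_sqrt
        ((le_ciSup (Finite.bddAbove_range fun i => ‖X i ω‖ ^ 2) i).trans h_max.le)
    have := abs_sum_abs_sub_integral_le_of_bounds hX hX_sq hτ (le_max_right _ _) hv
      (fun j => (h_small j).le) (by positivity) h_norm h_few.le j
    rw [mul_assoc, mul_self_sqrt hL.le] at this
    linarith
  calc _ ≤ _ := measureReal_mono h_incl
    _ ≤ _ := measureReal_union_le _ _
    _ ≤ _ := add_le_add_left (measureReal_union_le _ _) _
    _ ≤ Fintype.card κ * (2 * exp (-2 * L)) + 17 / L := by
        linarith [show 17 / L = 16 / L + 1 / L by ring]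

end Coordinates

theorem one_sub_div_log_le_measureReal_iSup_abs_inv_mul_sum_le {n p : ℕ} (hn : 2 ≤ n)
    {X : Fin n → Ω → Fin p → ℝ} (hX : ∀ i, Measurable (X i)) (hindep : iIndepFun X P)
    (hS : Integrable (fun ω => ⨆ i, ‖X i ω‖ ^ 2) P) {B σ2 : ℝ}
    (hB : B = √(∫ ω, ⨆ i, ‖X i ω‖ ^ 2 ∂P)) (hB0 : 0 < B)
    (hσ2 : σ2 = ⨆ j, (n : ℝ)⁻¹ * ∑ i, ∫ ω, X i ω j ^ 2 ∂P) :
    1 - 19 / log n ≤ P.real {ω | (⨆ j, |(n : ℝ)⁻¹ * ∑ i, (|X i ω j| - ∫ ω', |X i ω' j| ∂P)|)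
      ≤ 5 * (√(σ2 * log (max p n) / n) + B * log (max p n) / n)} := by
  set L : ℝ := log (max p n)
  have hn0 : (0 : ℝ) < n := by positivity
  have hlog : 0 < log n := log_pos (by exact_mod_cast hn)
  have hLn : log n ≤ L := log_le_log hn0 (le_max_right _ _)
  have hL : 0 < L := hlog.trans_le hLn
  have hB_sq : ∫ ω, ⨆ i, ‖X i ω‖ ^ 2 ∂P ≤ B ^ 2 := by
    rw [hB, sq_sqrt (integral_nonneg fun ω => Real.iSup_nonneg fun i => sq_nonneg _)]
  have hv (j : Fin p) : ∑ i, ∫ ω, X i ω j ^ 2 ∂P ≤ n * σ2 := by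
    have := hσ2 ▸ le_ciSup
      (Finite.bddAbove_range fun j => (n : ℝ)⁻¹ * ∑ i, ∫ ω, X i ω j ^ 2 ∂P) j
    rwa [inv_mul_le_iff₀ hn0] at this
  have h_dev := measureReal_exists_lt_abs_sum_abs_sub_integral_le hX hindep hS hB0 hL hB_sq hv
  have h_radius : 4 * √(n * σ2 * L) + 5 * (B * L) ≤ n * (5 * (√(σ2 * L / n) + B * L / n)) := by
    have h_sqrt : √(n * σ2 * L) = n * √(σ2 * L / n) := by
      rw [show (n : ℝ) * σ2 * L = n ^ 2 * (σ2 * L / n) by field_simp, sqrt_mul (sq_nonneg _),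
        sqrt_sq hn0.le]
    have h_cancel : (n : ℝ) * (5 * (B * L / n)) = 5 * (B * L) := by field_simp
    rw [h_sqrt, mul_add, mul_add, h_cancel]
    linarith [show 0 ≤ n * √(σ2 * L / n) by positivity]
  refine le_trans ?_ (one_sub_measureReal_le_of_compl_subset (B := {ω | ∃ j,
    4 * √(n * σ2 * L) + 5 * (B * L) < |∑ i, (|X i ω j| - ∫ ω', |X i ω' j| ∂P)|}) ?_)
  · rw [Fintype.card_fin] at h_dev
    have : 17 / L ≤ 17 / log n := by gcongr
    linarith [card_mul_two_mul_exp_neg_two_mul_log_max_le hn p,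
      show 19 / log n = 2 / log n + 17 / log n by ring]
  · intro ω hω
    by_contra h_small
    simp only [Set.mem_ofPred_eq, not_exists, not_lt] at h_small
    refine hω (Real.iSup_le (fun j => ?_) (by positivity))
    rw [abs_mul, abs_of_pos (inv_pos.2 hn0), inv_mul_le_iff₀ hn0]
    exact (h_small j).trans h_radius

end ProbabilityTheory

/-- **Fuk–Nagaev-type concentration inequality** (Chernozhukov–Chetverikov–Kato):
there are universal constants `c, C' > 0` such that for independent random
vectors `X₁,…,X_n` in `ℝ^p`, with probability at least `1 − C'·(log n)⁻¹`,
`max_j |n⁻¹ Σᵢ (|X_{ij}| − E|X_{ij}|)| ≤ c·(√(σ²·log(p∨n)/n) + B·log(p∨n)/n)`,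
where `B² = E[maxᵢ ‖Xᵢ‖_∞²]` and `σ² = max_j n⁻¹ Σᵢ E[X_{ij}²]`. -/
theorem stmt15 :
    ∃ c : ℝ, 0 < c ∧ ∃ C' : ℝ, 0 < C' ∧
      ∀ (Ω : Type) [MeasurableSpace Ω] (P : Measure Ω),
        IsProbabilityMeasure P →
        ∀ n p : ℕ, 2 ≤ n → 1 ≤ p →
          ∀ X : Fin n → Ω → (Fin p → ℝ),
            (∀ i, Measurable (X i)) →
            iIndepFun X P →
            Integrable (fun ω => ⨆ i : Fin n, ‖X i ω‖ ^ 2) P →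
            ∀ B σ2 : ℝ,
              B = Real.sqrt (∫ ω, ⨆ i : Fin n, ‖X i ω‖ ^ 2 ∂P) →
              σ2 = (⨆ j : Fin p,
                (n : ℝ)⁻¹ * ∑ i : Fin n, ∫ ω, (X i ω j) ^ 2 ∂P) →
              1 - C' / Real.log n ≤
                (P {ω | (⨆ j : Fin p, |(n : ℝ)⁻¹ *
                      ∑ i : Fin n, (|X i ω j| - ∫ ω', |X i ω' j| ∂P)|)
                    ≤ c * (Real.sqrt (σ2 * Real.log (max p n) / n)
                        + B * Real.log (max p n) / n)}).toReal := by
  refine ⟨5, by norm_num, 19, by norm_num, fun Ω _ P _ n p hn _ X hX hindep hS B σ2 hB hσ2 => ?_⟩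
  rcases (hB ▸ sqrt_nonneg _ : 0 ≤ B).eq_or_lt with hB0 | hB0
  · have h0 : ∫ ω, ⨆ i, ‖X i ω‖ ^ 2 ∂P = 0 := by
      rw [← sq_sqrt (integral_nonneg fun ω => Real.iSup_nonneg fun i => sq_nonneg _), ← hB,
        ← hB0, sq, zero_mul]
    rw [← hB0, zero_mul, zero_div, add_zero, ← measureReal_def,
      measureReal_iSup_abs_mul_sum_abs_sub_integral_le_eq_one hS h0 _ (by positivity)]
    linarith [div_nonneg (by norm_num : (0 : ℝ) ≤ 19) (log_natCast_nonneg n)]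
  · exact one_sub_div_log_le_measureReal_iSup_abs_inv_mul_sum_le hn hX hindep hS hB hB0 hσ2
end
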